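/- Let n ≥ 1, γ ∈ ℝ, let U ⊆ ℝⁿ be open, and let v : ℝⁿ → ℝ be three times continuously differentiable and strictly positive on U. Then the identity (identityB) holds pointwise on U: v^{γ−1}·∑_{i,j} S²_{ij}(D²v)·v_i·v_j = (3/2)·v^{γ−1}·|Dv|²·Δv + ((γ−1)/2)·v^{γ−2}·|Dv|⁴ − (1/2)·div( v^{γ−1}·|Dv|²·Dv ). -/

import Mathlib

/-!
By the product rule, `∂ⱼ(v^{γ-1}|Dv|² vⱼ)` summed over `j` equals
`v^{γ-1}|Dv|²Δv + 2v^{γ-1}D²v(Dv,Dv) + (γ-1)v^{γ-2}|Dv|⁴`, while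
`∑ S²ᵢⱼ vᵢvⱼ = |Dv|²Δv - D²v(Dv,Dv)`. Eliminating `D²v(Dv,Dv)` gives the identity.
-/

/-- Partial derivative `∂_i f` of a function on `ℝⁿ`. -/
noncomputable def pd {n : ℕ} (i : Fin n) (f : (Fin n → ℝ) → ℝ) (x : Fin n → ℝ) : ℝ :=
  fderiv ℝ f x (Pi.single i 1)

/-- Laplacian `Δf = ∑ᵢ ∂ᵢᵢ f`. -/
noncomputable def lap {n : ℕ} (f : (Fin n → ℝ) → ℝ) (x : Fin n → ℝ) : ℝ :=
  ∑ i, pd i (pd i f) x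

/-- `S²_{ij}(D²v) = (Δv)·δ_{ij} − ∂_{ij}v`. -/
noncomputable def S2ij {n : ℕ} (v : (Fin n → ℝ) → ℝ) (i j : Fin n) (x : Fin n → ℝ) : ℝ :=
  lap v x * (if i = j then 1 else 0) - pd j (pd i v) x

/-- `|Df|² = ∑ᵢ (∂ᵢf)²`. -/
noncomputable def gradSq {n : ℕ} (f : (Fin n → ℝ) → ℝ) (x : Fin n → ℝ) : ℝ :=
  ∑ i, (pd i f x) ^ 2

section PartialDerivatives

variable {n : ℕ} {f g : (Fin n → ℝ) → ℝ} {x : Fin n → ℝ}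

theorem HasFDerivAt.pd_eq {f' : (Fin n → ℝ) →L[ℝ] ℝ} (h : HasFDerivAt f f' x) (i : Fin n) :
    pd i f x = f' (Pi.single i 1) := by
  rw [pd, h.fderiv]

theorem pd_mul (hf : DifferentiableAt ℝ f x) (hg : DifferentiableAt ℝ g x) (i : Fin n) :
    pd i (fun y => f y * g y) x = pd i f x * g x + f x * pd i g x := by
  rw [(hf.hasFDerivAt.fun_mul hg.hasFDerivAt).pd_eq, pd, pd]
  simp only [add_apply, smul_apply, smul_eq_mul]
  ring

theorem pd_rpow_const (hf : DifferentiableAt ℝ f x) (hfx : f x ≠ 0) (p : ℝ) (i : Fin n) :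
    pd i (fun y => f y ^ p) x = p * f x ^ (p - 1) * pd i f x := by
  rw [(hf.hasFDerivAt.rpow_const (Or.inl hfx)).pd_eq, pd, smul_apply, smul_eq_mul]

theorem ContDiffAt.differentiableAt_pd (hf : ContDiffAt ℝ 2 f x) (i : Fin n) :
    DifferentiableAt ℝ (pd i f) x :=
  ((hf.fderiv_right (m := 1) (by norm_num)).clm_apply contDiffAt_const).differentiableAt
    one_ne_zero

theorem differentiableAt_gradSq (h : ∀ k, DifferentiableAt ℝ (pd k f) x) :
    DifferentiableAt ℝ (gradSq f) x := by
  unfold gradSq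
  fun_prop

theorem pd_gradSq (h : ∀ k, DifferentiableAt ℝ (pd k f) x) (i : Fin n) :
    pd i (gradSq f) x = 2 * ∑ k, pd k f x * pd i (pd k f) x := by
  have hsum : HasFDerivAt (gradSq f) (∑ k, (2 * pd k f x) • fderiv ℝ (pd k f) x) x := by
    refine HasFDerivAt.fun_sum fun k _ => ?_
    simpa [pow_two, two_mul, add_smul] using (h k).hasFDerivAt.fun_mul (h k).hasFDerivAt
  rw [hsum.pd_eq, Finset.mul_sum]
  simp only [sum_apply, smul_apply, smul_eq_mul, mul_assoc]
  rfl

end PartialDerivatives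

noncomputable def hessGradGrad {n : ℕ} (v : (Fin n → ℝ) → ℝ) (x : Fin n → ℝ) : ℝ :=
  ∑ i, ∑ j, pd j (pd i v) x * pd i v x * pd j v x

theorem sum_S2ij_mul_pd_mul_pd {n : ℕ} (v : (Fin n → ℝ) → ℝ) (x : Fin n → ℝ) :
    ∑ i, ∑ j, S2ij v i j x * pd i v x * pd j v x = lap v x * gradSq v x - hessGradGrad v x := by
  simp only [S2ij, sub_mul, Finset.sum_sub_distrib, mul_ite, mul_one, mul_zero, ite_mul,
    zero_mul, Finset.sum_ite_eq, Finset.mem_univ, if_true, hessGradGrad, gradSq, Finset.mul_sum]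
  congr 1
  exact Finset.sum_congr rfl fun i _ => by ring

theorem sum_pd_rpow_mul_gradSq_mul_pd {n : ℕ} {v : (Fin n → ℝ) → ℝ} {x : Fin n → ℝ}
    (hv : DifferentiableAt ℝ v x) (hvx : v x ≠ 0)
    (hpd : ∀ i, DifferentiableAt ℝ (pd i v) x) (p : ℝ) :
    ∑ j, pd j (fun y => v y ^ p * gradSq v y * pd j v y) x
      = v x ^ p * gradSq v x * lap v x + 2 * v x ^ p * hessGradGrad v x
        + p * v x ^ (p - 1) * gradSq v x ^ 2 := by
  have hpow : DifferentiableAt ℝ (fun y => v y ^ p) x := hv.rpow_const (Or.inl hvx)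
  have hprod : DifferentiableAt ℝ (fun y => v y ^ p * gradSq v y) x :=
    hpow.mul (differentiableAt_gradSq hpd)
  have hterm : ∀ j, pd j (fun y => v y ^ p * gradSq v y * pd j v y) x
      = v x ^ p * gradSq v x * pd j (pd j v) x
        + 2 * v x ^ p * (pd j v x * ∑ i, pd i v x * pd j (pd i v) x)
        + p * v x ^ (p - 1) * gradSq v x * pd j v x ^ 2 := fun j => by
    rw [pd_mul hprod (hpd j), pd_mul hpow (differentiableAt_gradSq hpd),
      pd_rpow_const hv hvx, pd_gradSq hpd]
    ring
  have hhess : ∑ j, pd j v x * ∑ i, pd i v x * pd j (pd i v) x = hessGradGrad v x := by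
    rw [hessGradGrad, Finset.sum_comm]
    simp only [Finset.mul_sum]
    exact Finset.sum_congr rfl fun i _ => Finset.sum_congr rfl fun j _ => by ring
  simp only [hterm, Finset.sum_add_distrib, ← Finset.mul_sum, hhess]
  simp only [lap, gradSq]
  ring

theorem stmt_5_general (n : ℕ) (γ : ℝ) (U : Set (Fin n → ℝ)) (hU : IsOpen U)
    (v : (Fin n → ℝ) → ℝ) (hv : ContDiffOn ℝ 3 v U) (hpos : ∀ x ∈ U, 0 < v x)
    (x : Fin n → ℝ) (hx : x ∈ U) :
    v x ^ (γ - 1) * ∑ i, ∑ j, S2ij v i j x * pd i v x * pd j v x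
      = (3 / 2) * v x ^ (γ - 1) * gradSq v x * lap v x
        + ((γ - 1) / 2) * v x ^ (γ - 2) * (gradSq v x) ^ 2
        - (1 / 2) * ∑ j, pd j (fun y => v y ^ (γ - 1) * gradSq v y * pd j v y) x := by
  have hv2 : ContDiffAt ℝ 2 v x := (hv.contDiffAt (hU.mem_nhds hx)).of_le (by norm_num)
  rw [sum_S2ij_mul_pd_mul_pd, sum_pd_rpow_mul_gradSq_mul_pd (hv2.differentiableAt two_ne_zero)
    (hpos x hx).ne' hv2.differentiableAt_pd, show γ - 1 - 1 = γ - 2 by ring]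
  ring

/-- Identity (identityB):
`v^{γ−1}·S²_{ij}(D²v)·vᵢ·vⱼ = (3/2)·v^{γ−1}·|Dv|²·Δv + ((γ−1)/2)·v^{γ−2}·|Dv|⁴
  − (1/2)·div(v^{γ−1}·|Dv|²·Dv)` on `U`. -/
theorem stmt_5 (n : ℕ) (hn : 1 ≤ n) (γ : ℝ) (U : Set (Fin n → ℝ)) (hU : IsOpen U)
    (v : (Fin n → ℝ) → ℝ) (hv : ContDiffOn ℝ 3 v U) (hpos : ∀ x ∈ U, 0 < v x)
    (x : Fin n → ℝ) (hx : x ∈ U) :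
    v x ^ (γ - 1) * ∑ i, ∑ j, S2ij v i j x * pd i v x * pd j v x
      = (3 / 2) * v x ^ (γ - 1) * gradSq v x * lap v x
        + ((γ - 1) / 2) * v x ^ (γ - 2) * (gradSq v x) ^ 2
        - (1 / 2) * ∑ j, pd j (fun y => v y ^ (γ - 1) * gradSq v y * pd j v y) x :=
  stmt_5_general n γ U hU v hv hpos x hx
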